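/- arXiv:1911.12737 — 2 statements merged into one kernel-verified Lean document; each statement's English description precedes it below -/
import Mathlib

section
/- Progress for LL(1) derivatives: for every LL(1) syntax s : Syntax A (i.e. ¬HasConflict s) and every token t with kind t ∈ First s, and for all token sequences ts and values v : A, Matches s (t :: ts) v if and only if Matches (δ t s) ts v. -/
/-!
Induction on the derivation of `kind t ∈ First s`. The derivative follows the branch through which
`t` enters that derivation, and LL(1)-ness rules out every other way of consuming `t`: it would put
`kind t` into the `First` sets of both sides of a disjunction, or into `ShouldNotFollow s₁ ∩ First s₂`
for a sequence, since a nullable syntax has its whole `First` set in its `ShouldNotFollow` set.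
-/

set_option autoImplicit false

/-- Context-free syntaxes (value-aware context-free expressions). -/
inductive Syn (Token Kind : Type) (Var : Type → Type) : Type → Type 1 where
  | elem (k : Kind) : Syn Token Kind Var Token
  | fail {A : Type} : Syn Token Kind Var A
  | eps {A : Type} (v : A) : Syn Token Kind Var A
  | disj {A : Type} (s₁ s₂ : Syn Token Kind Var A) : Syn Token Kind Var A
  | seqn {A B : Type} (s₁ : Syn Token Kind Var A) (s₂ : Syn Token Kind Var B) :
      Syn Token Kind Var (A × B)
  | map {A B : Type} (f : A → B) (s : Syn Token Kind Var A) : Syn Token Kind Var B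
  | var {A : Type} (x : Var A) : Syn Token Kind Var A

section

variable {Token Kind : Type} {Var : Type → Type}
variable (kd : Token → Kind) (env : ∀ A : Type, Var A → Syn Token Kind Var A)

/-- Semantics of syntaxes. -/
inductive Matches : ∀ {A : Type}, Syn Token Kind Var A → List Token → A → Prop where
  | elem {k : Kind} {t : Token} (h : kd t = k) : Matches (Syn.elem k) [t] t
  | eps {A : Type} (v : A) : Matches (Syn.eps v) [] v
  | disjL {A : Type} {s₁ s₂ : Syn Token Kind Var A} {ts : List Token} {v : A} :
      Matches s₁ ts v → Matches (Syn.disj s₁ s₂) ts v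
  | disjR {A : Type} {s₁ s₂ : Syn Token Kind Var A} {ts : List Token} {v : A} :
      Matches s₂ ts v → Matches (Syn.disj s₁ s₂) ts v
  | seqn {A B : Type} {s₁ : Syn Token Kind Var A} {s₂ : Syn Token Kind Var B}
      {ts₁ ts₂ : List Token} {v₁ : A} {v₂ : B} :
      Matches s₁ ts₁ v₁ → Matches s₂ ts₂ v₂ →
      Matches (Syn.seqn s₁ s₂) (ts₁ ++ ts₂) (v₁, v₂)
  | map {A B : Type} (f : A → B) {s : Syn Token Kind Var A} {ts : List Token} {v : A} :
      Matches s ts v → Matches (Syn.map f s) ts (f v)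
  | var {A : Type} (x : Var A) {ts : List Token} {v : A} :
      Matches (env A x) ts v → Matches (Syn.var x) ts v

/-- Productivity. -/
inductive Productive : ∀ {A : Type}, Syn Token Kind Var A → Prop where
  | eps {A : Type} (v : A) : Productive (Syn.eps v)
  | elem (k : Kind) : Productive (Syn.elem k)
  | disjL {A : Type} {s₁ s₂ : Syn Token Kind Var A} :
      Productive s₁ → Productive (Syn.disj s₁ s₂)
  | disjR {A : Type} {s₁ s₂ : Syn Token Kind Var A} :
      Productive s₂ → Productive (Syn.disj s₁ s₂)
  | seqn {A B : Type} {s₁ : Syn Token Kind Var A} {s₂ : Syn Token Kind Var B} :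
      Productive s₁ → Productive s₂ → Productive (Syn.seqn s₁ s₂)
  | map {A B : Type} (f : A → B) {s : Syn Token Kind Var A} :
      Productive s → Productive (Syn.map f s)
  | var {A : Type} (x : Var A) : Productive (env A x) → Productive (Syn.var x)

/-- Nullability, with associated value. -/
inductive Nullable : ∀ {A : Type}, Syn Token Kind Var A → A → Prop where
  | eps {A : Type} (v : A) : Nullable (Syn.eps v) v
  | disjL {A : Type} {s₁ s₂ : Syn Token Kind Var A} {v : A} :
      Nullable s₁ v → Nullable (Syn.disj s₁ s₂) v
  | disjR {A : Type} {s₁ s₂ : Syn Token Kind Var A} {v : A} :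
      Nullable s₂ v → Nullable (Syn.disj s₁ s₂) v
  | seqn {A B : Type} {s₁ : Syn Token Kind Var A} {s₂ : Syn Token Kind Var B} {v₁ : A} {v₂ : B} :
      Nullable s₁ v₁ → Nullable s₂ v₂ → Nullable (Syn.seqn s₁ s₂) (v₁, v₂)
  | map {A B : Type} (f : A → B) {s : Syn Token Kind Var A} {v : A} :
      Nullable s v → Nullable (Syn.map f s) (f v)
  | var {A : Type} (x : Var A) {v : A} : Nullable (env A x) v → Nullable (Syn.var x) v

/-- First sets: `InFirst env k s` means `k ∈ First s`. -/
inductive InFirst : ∀ {A : Type}, Kind → Syn Token Kind Var A → Prop where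
  | elem (k : Kind) : InFirst k (Syn.elem k)
  | disjL {A : Type} {k : Kind} {s₁ s₂ : Syn Token Kind Var A} :
      InFirst k s₁ → InFirst k (Syn.disj s₁ s₂)
  | disjR {A : Type} {k : Kind} {s₁ s₂ : Syn Token Kind Var A} :
      InFirst k s₂ → InFirst k (Syn.disj s₁ s₂)
  | seqnL {A B : Type} {k : Kind} {s₁ : Syn Token Kind Var A} {s₂ : Syn Token Kind Var B} :
      InFirst k s₁ → Productive env s₂ → InFirst k (Syn.seqn s₁ s₂)
  | seqnR {A B : Type} {k : Kind} {s₁ : Syn Token Kind Var A} {s₂ : Syn Token Kind Var B}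
      {v : A} : Nullable env s₁ v → InFirst k s₂ → InFirst k (Syn.seqn s₁ s₂)
  | map {A B : Type} {k : Kind} (f : A → B) {s : Syn Token Kind Var A} :
      InFirst k s → InFirst k (Syn.map f s)
  | var {A : Type} {k : Kind} (x : Var A) : InFirst k (env A x) → InFirst k (Syn.var x)

/-- Should-not-follow sets: `InSNF env k s` means `k ∈ ShouldNotFollow s`. -/
inductive InSNF : ∀ {A : Type}, Kind → Syn Token Kind Var A → Prop where
  | disjL {A : Type} {k : Kind} {s₁ s₂ : Syn Token Kind Var A} :
      InSNF k s₁ → InSNF k (Syn.disj s₁ s₂)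
  | disjR {A : Type} {k : Kind} {s₁ s₂ : Syn Token Kind Var A} :
      InSNF k s₂ → InSNF k (Syn.disj s₁ s₂)
  | disjFN {A : Type} {k : Kind} {s₁ s₂ : Syn Token Kind Var A} {v : A} :
      InFirst env k s₁ → Nullable env s₂ v → InSNF k (Syn.disj s₁ s₂)
  | disjNF {A : Type} {k : Kind} {s₁ s₂ : Syn Token Kind Var A} {v : A} :
      Nullable env s₁ v → InFirst env k s₂ → InSNF k (Syn.disj s₁ s₂)
  | seqnL {A B : Type} {k : Kind} {s₁ : Syn Token Kind Var A} {s₂ : Syn Token Kind Var B}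
      {v : B} : InSNF k s₁ → Nullable env s₂ v → InSNF k (Syn.seqn s₁ s₂)
  | seqnR {A B : Type} {k : Kind} {s₁ : Syn Token Kind Var A} {s₂ : Syn Token Kind Var B} :
      Productive env s₁ → InSNF k s₂ → InSNF k (Syn.seqn s₁ s₂)
  | map {A B : Type} {k : Kind} (f : A → B) {s : Syn Token Kind Var A} :
      InSNF k s → InSNF k (Syn.map f s)
  | var {A : Type} {k : Kind} (x : Var A) : InSNF k (env A x) → InSNF k (Syn.var x)

/-- LL(1) conflicts. A syntax `s` is LL(1) iff `¬ HasConflict env s`. -/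
inductive HasConflict : ∀ {A : Type}, Syn Token Kind Var A → Prop where
  | disjNN {A : Type} {s₁ s₂ : Syn Token Kind Var A} {v₁ v₂ : A} :
      Nullable env s₁ v₁ → Nullable env s₂ v₂ → HasConflict (Syn.disj s₁ s₂)
  | disjFF {A : Type} {s₁ s₂ : Syn Token Kind Var A} {k : Kind} :
      InFirst env k s₁ → InFirst env k s₂ → HasConflict (Syn.disj s₁ s₂)
  | disjL {A : Type} {s₁ s₂ : Syn Token Kind Var A} :
      HasConflict s₁ → HasConflict (Syn.disj s₁ s₂)
  | disjR {A : Type} {s₁ s₂ : Syn Token Kind Var A} :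
      HasConflict s₂ → HasConflict (Syn.disj s₁ s₂)
  | seqnSF {A B : Type} {s₁ : Syn Token Kind Var A} {s₂ : Syn Token Kind Var B} {k : Kind} :
      InSNF env k s₁ → InFirst env k s₂ → HasConflict (Syn.seqn s₁ s₂)
  | seqnL {A B : Type} {s₁ : Syn Token Kind Var A} {s₂ : Syn Token Kind Var B} :
      HasConflict s₁ → HasConflict (Syn.seqn s₁ s₂)
  | seqnR {A B : Type} {s₁ : Syn Token Kind Var A} {s₂ : Syn Token Kind Var B} :
      HasConflict s₂ → HasConflict (Syn.seqn s₁ s₂)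
  | map {A B : Type} (f : A → B) {s : Syn Token Kind Var A} :
      HasConflict s → HasConflict (Syn.map f s)
  | var {A : Type} (x : Var A) : HasConflict (env A x) → HasConflict (Syn.var x)

end

/-- Layers of a context, with above type `A` and below type `B`. -/
inductive Layer (Token Kind : Type) (Var : Type → Type) : Type → Type → Type 1 where
  | apply {A B : Type} (f : A → B) : Layer Token Kind Var A B
  | prepend {A C : Type} (v : C) : Layer Token Kind Var A (C × A)
  | followBy {A C : Type} (s : Syn Token Kind Var C) : Layer Token Kind Var A (A × C)

/-- Type-aligned contexts (stacks of layers). -/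
inductive Ctx (Token Kind : Type) (Var : Type → Type) : Type → Type → Type 1 where
  | nil {A : Type} : Ctx Token Kind Var A A
  | cons {A B C : Type} (l : Layer Token Kind Var A B) (c : Ctx Token Kind Var B C) :
      Ctx Token Kind Var A C

section

variable {Token Kind : Type} {Var : Type → Type}

def Ctx.isNil : ∀ {A B : Type}, Ctx Token Kind Var A B → Bool
  | _, _, Ctx.nil => true
  | _, _, Ctx.cons _ _ => false

/-- Unfocusing a focused syntax. -/
def unfocus : ∀ {A B : Type}, Syn Token Kind Var A → Ctx Token Kind Var A B →
    Syn Token Kind Var B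
  | _, _, s, Ctx.nil => s
  | _, _, s, Ctx.cons (Layer.apply f) c => unfocus (Syn.map f s) c
  | _, _, s, Ctx.cons (Layer.prepend v) c => unfocus (Syn.seqn (Syn.eps v) s) c
  | _, _, s, Ctx.cons (Layer.followBy s') c => unfocus (Syn.seqn s s') c

/-- Focused syntaxes with below type `B`. -/
def Focused (Token Kind : Type) (Var : Type → Type) (B : Type) : Type 1 :=
  (A : Type) × Syn Token Kind Var A × Ctx Token Kind Var A B

def unfocusF {B : Type} (fs : Focused Token Kind Var B) : Syn Token Kind Var B :=
  unfocus fs.2.1 fs.2.2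

def focusF {A : Type} (s : Syn Token Kind Var A) : Focused Token Kind Var A :=
  ⟨A, s, Ctx.nil⟩

/-- Plugging a value into a context. -/
def plug : ∀ {A B : Type}, A → Ctx Token Kind Var A B → Focused Token Kind Var B
  | A, _, v, Ctx.nil => ⟨A, Syn.eps v, Ctx.nil⟩
  | _, _, v, Ctx.cons (Layer.apply f) c => plug (f v) c
  | _, _, v, Ctx.cons (Layer.prepend v') c => plug (v', v) c
  | _, _, v, Ctx.cons (Layer.followBy s) c => ⟨_, s, Ctx.cons (Layer.prepend v) c⟩

end

section

variable {Token Kind : Type} {Var : Type → Type}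
variable (kd : Token → Kind) (env : ∀ A : Type, Var A → Syn Token Kind Var A)

/- `cases` cannot invert `Matches` or `Nullable` at `seqn`, as that would need injectivity of
`×`; recursion on the syntax avoids the problem. -/
def MatchesSeqnSplit : ∀ {C : Type}, Syn Token Kind Var C → List Token → C → Prop
  | _, Syn.seqn s₁ s₂, ts, v =>
      ∃ ts₁ ts₂, ts = ts₁ ++ ts₂ ∧ Matches kd env s₁ ts₁ v.1 ∧ Matches kd env s₂ ts₂ v.2
  | _, _, _, _ => True

def NullableSeqnSplit : ∀ {C : Type}, Syn Token Kind Var C → C → Prop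
  | _, Syn.seqn s₁ s₂, v => Nullable env s₁ v.1 ∧ Nullable env s₂ v.2
  | _, _, _ => True

variable {kd env} {A B : Type} {t : Token} {ts : List Token}

theorem Matches.seqnSplit {C : Type} {s : Syn Token Kind Var C} {v : C}
    (h : Matches kd env s ts v) : MatchesSeqnSplit kd env s ts v := by
  cases h <;> first | trivial | exact ⟨_, _, rfl, ‹_›, ‹_›⟩

theorem Nullable.seqnSplit {C : Type} {s : Syn Token Kind Var C} {v : C}
    (h : Nullable env s v) : NullableSeqnSplit env s v := by
  cases h <;> trivial

theorem matches_seqn_iff {s₁ : Syn Token Kind Var A} {s₂ : Syn Token Kind Var B} {v : A × B} :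
    Matches kd env (Syn.seqn s₁ s₂) ts v ↔
      ∃ ts₁ ts₂, ts = ts₁ ++ ts₂ ∧ Matches kd env s₁ ts₁ v.1 ∧ Matches kd env s₂ ts₂ v.2 :=
  ⟨Matches.seqnSplit, fun ⟨_, _, hts, h₁, h₂⟩ => hts ▸ Matches.seqn h₁ h₂⟩

theorem matches_elem_iff {k : Kind} {v : Token} :
    Matches kd env (Syn.elem k : Syn Token Kind Var Token) ts v ↔ ts = [v] ∧ kd v = k := by
  refine ⟨fun h => ?_, fun ⟨hts, hk⟩ => hts ▸ Matches.elem hk⟩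
  cases h
  exact ⟨rfl, ‹_›⟩

theorem matches_eps_iff {w v : A} :
    Matches kd env (Syn.eps w : Syn Token Kind Var A) ts v ↔ ts = [] ∧ v = w := by
  refine ⟨fun h => ?_, fun ⟨hts, hv⟩ => hts ▸ hv ▸ Matches.eps v⟩
  cases h
  exact ⟨rfl, rfl⟩

theorem matches_disj_iff {s₁ s₂ : Syn Token Kind Var A} {v : A} :
    Matches kd env (Syn.disj s₁ s₂) ts v ↔ Matches kd env s₁ ts v ∨ Matches kd env s₂ ts v := by
  refine ⟨fun h => ?_, fun h => h.elim Matches.disjL Matches.disjR⟩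
  cases h
  exacts [Or.inl ‹_›, Or.inr ‹_›]

theorem matches_map_iff {f : A → B} {s : Syn Token Kind Var A} {v : B} :
    Matches kd env (Syn.map f s) ts v ↔ ∃ v', f v' = v ∧ Matches kd env s ts v' := by
  refine ⟨fun h => ?_, fun ⟨_, hv, h⟩ => hv ▸ Matches.map f h⟩
  cases h
  exact ⟨_, rfl, ‹_›⟩

theorem matches_var_iff {x : Var A} {v : A} :
    Matches kd env (Syn.var x) ts v ↔ Matches kd env (env A x) ts v := by
  refine ⟨fun h => ?_, Matches.var x⟩
  cases h
  assumption

theorem matches_seqn_eps_iff {w : A} {s : Syn Token Kind Var B} {v : A × B} :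
    Matches kd env (Syn.seqn (Syn.eps w) s) ts v ↔ v.1 = w ∧ Matches kd env s ts v.2 := by
  simp only [matches_seqn_iff, matches_eps_iff]
  constructor
  · rintro ⟨_, _, rfl, ⟨rfl, hv⟩, h⟩
    exact ⟨hv, h⟩
  · rintro ⟨hv, h⟩
    exact ⟨[], ts, rfl, ⟨rfl, hv⟩, h⟩

theorem Nullable.matches_nil {s : Syn Token Kind Var A} {v : A} (h : Nullable env s v) :
    Matches kd env s [] v := by
  induction h with
  | eps v => exact .eps v
  | disjL _ ih => exact .disjL ih
  | disjR _ ih => exact .disjR ih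
  | seqn _ _ ih₁ ih₂ => exact .seqn ih₁ ih₂
  | map f _ ih => exact .map f ih
  | var x _ ih => exact .var x ih

theorem Nullable.productive {s : Syn Token Kind Var A} {v : A} (h : Nullable env s v) :
    Productive env s := by
  induction h with
  | eps v => exact .eps v
  | disjL _ ih => exact .disjL ih
  | disjR _ ih => exact .disjR ih
  | seqn _ _ ih₁ ih₂ => exact .seqn ih₁ ih₂
  | map f _ ih => exact .map f ih
  | var x _ ih => exact .var x ih

theorem Matches.nullable {s : Syn Token Kind Var A} {v : A} (h : Matches kd env s [] v) :
    Nullable env s v := by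
  generalize hts : [] = ts at h
  induction h with
  | elem => cases hts
  | eps v => exact .eps v
  | disjL _ ih => exact .disjL (ih hts)
  | disjR _ ih => exact .disjR (ih hts)
  | seqn _ _ ih₁ ih₂ =>
    obtain ⟨rfl, rfl⟩ := List.append_eq_nil_iff.mp hts.symm
    exact .seqn (ih₁ rfl) (ih₂ rfl)
  | map f _ ih => exact .map f (ih hts)
  | var x _ ih => exact .var x (ih hts)

theorem Matches.productive {s : Syn Token Kind Var A} {v : A} (h : Matches kd env s ts v) :
    Productive env s := by
  induction h with
  | elem => exact .elem _
  | eps v => exact .eps v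
  | disjL _ ih => exact .disjL ih
  | disjR _ ih => exact .disjR ih
  | seqn _ _ ih₁ ih₂ => exact .seqn ih₁ ih₂
  | map f _ ih => exact .map f ih
  | var x _ ih => exact .var x ih

theorem Matches.inFirst {s : Syn Token Kind Var A} {v : A} (h : Matches kd env s (t :: ts) v) :
    InFirst env (kd t) s := by
  generalize hts : t :: ts = ts' at h
  induction h generalizing ts with
  | elem hk =>
    cases hts
    exact hk ▸ .elem _
  | eps => cases hts
  | disjL _ ih => exact .disjL (ih hts)
  | disjR _ ih => exact .disjR (ih hts)
  | @seqn _ _ _ _ ts₁ _ _ _ h₁ h₂ ih₁ ih₂ =>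
    cases ts₁ with
    | nil => exact .seqnR h₁.nullable (ih₂ hts)
    | cons => cases hts; exact .seqnL (ih₁ rfl) h₂.productive
  | map f _ ih => exact .map f (ih hts)
  | var x _ ih => exact .var x (ih hts)

theorem InFirst.inSNF {k : Kind} {s : Syn Token Kind Var A} {w : A} (hf : InFirst env k s)
    (hn : Nullable env s w) : InSNF env k s := by
  induction hf with
  | elem => cases hn
  | disjL h₁ ih =>
    cases hn
    · exact .disjL (ih ‹_›)
    · exact .disjFN h₁ ‹_›
  | disjR h₂ ih =>
    cases hn
    · exact .disjNF ‹_› h₂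
    · exact .disjR (ih ‹_›)
  | seqnL _ _ ih =>
    obtain ⟨hn₁, hn₂⟩ := hn.seqnSplit
    exact .seqnL (ih hn₁) hn₂
  | seqnR _ _ ih =>
    obtain ⟨hn₁, hn₂⟩ := hn.seqnSplit
    exact .seqnR hn₁.productive (ih hn₂)
  | map f _ ih =>
    cases hn
    exact .map f (ih ‹_›)
  | var x _ ih =>
    cases hn
    exact .var x (ih ‹_›)

theorem matches_disj_cons_iff_left {s₁ s₂ : Syn Token Kind Var A} {v : A}
    (hs : ¬ HasConflict env (Syn.disj s₁ s₂)) (h₁ : InFirst env (kd t) s₁) :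
    Matches kd env (Syn.disj s₁ s₂) (t :: ts) v ↔ Matches kd env s₁ (t :: ts) v := by
  rw [matches_disj_iff, or_iff_left_iff_imp]
  exact fun h₂ => absurd (.disjFF h₁ (h₂.inFirst)) hs

theorem matches_disj_cons_iff_right {s₁ s₂ : Syn Token Kind Var A} {v : A}
    (h₁ : ¬ InFirst env (kd t) s₁) :
    Matches kd env (Syn.disj s₁ s₂) (t :: ts) v ↔ Matches kd env s₂ (t :: ts) v := by
  rw [matches_disj_iff, or_iff_right_iff_imp]
  exact fun h => absurd (h.inFirst) h₁

theorem matches_seqn_cons_iff_left {s₁ : Syn Token Kind Var A} {s₂ : Syn Token Kind Var B}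
    {v : A × B} (h₂ : ∀ w, Nullable env s₁ w → ¬ InFirst env (kd t) s₂) :
    Matches kd env (Syn.seqn s₁ s₂) (t :: ts) v ↔
      ∃ ts₁ ts₂, ts = ts₁ ++ ts₂ ∧
        Matches kd env s₁ (t :: ts₁) v.1 ∧ Matches kd env s₂ ts₂ v.2 := by
  rw [matches_seqn_iff]
  constructor
  · rintro ⟨ts₁, ts₂, hts, m₁, m₂⟩
    obtain ⟨rfl, rfl⟩ | ⟨ts₁', rfl, rfl⟩ := List.cons_eq_append_iff.mp hts
    · exact absurd (m₂.inFirst) (h₂ _ (m₁.nullable))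
    · exact ⟨ts₁', ts₂, rfl, m₁, m₂⟩
  · rintro ⟨ts₁, ts₂, rfl, m₁, m₂⟩
    exact ⟨t :: ts₁, ts₂, rfl, m₁, m₂⟩

theorem matches_seqn_cons_iff_right {s₁ : Syn Token Kind Var A} {s₂ : Syn Token Kind Var B}
    {v : A × B} {w : A} (hs : ¬ HasConflict env (Syn.seqn s₁ s₂)) (hn : Nullable env s₁ w)
    (h₂ : InFirst env (kd t) s₂) :
    Matches kd env (Syn.seqn s₁ s₂) (t :: ts) v ↔
      Nullable env s₁ v.1 ∧ Matches kd env s₂ (t :: ts) v.2 := by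
  rw [matches_seqn_iff]
  constructor
  · rintro ⟨ts₁, ts₂, hts, m₁, m₂⟩
    obtain ⟨rfl, rfl⟩ | ⟨ts₁', rfl, rfl⟩ := List.cons_eq_append_iff.mp hts
    · exact ⟨m₁.nullable, m₂⟩
    · exact absurd (.seqnSF ((m₁.inFirst).inSNF hn) h₂) hs
  · rintro ⟨hn₁, m₂⟩
    exact ⟨[], t :: ts, rfl, hn₁.matches_nil, m₂⟩

end

section

variable {Token Kind : Type} {Var : Type → Type}
variable (kd : Token → Kind) (env : ∀ A : Type, Var A → Syn Token Kind Var A)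

theorem derive_progress
    (nullOpt : ∀ {A : Type}, Syn Token Kind Var A → Option A)
    (hnull : ∀ {A : Type} (s : Syn Token Kind Var A), ¬ HasConflict env s →
      ∀ v : A, nullOpt s = some v ↔ Nullable env s v)
    (delta : ∀ {A : Type}, Token → Syn Token Kind Var A → Syn Token Kind Var A)
    (hdelta_elem : ∀ (t : Token) (k : Kind),
      ¬ HasConflict env (Syn.elem k : Syn Token Kind Var Token) →
      InFirst env (kd t) (Syn.elem k : Syn Token Kind Var Token) →
      delta t (Syn.elem k) = Syn.eps t)
    (hdelta_disj₁ : ∀ {A : Type} (t : Token) (s₁ s₂ : Syn Token Kind Var A),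
      ¬ HasConflict env (Syn.disj s₁ s₂) → InFirst env (kd t) (Syn.disj s₁ s₂) →
      InFirst env (kd t) s₁ → delta t (Syn.disj s₁ s₂) = delta t s₁)
    (hdelta_disj₂ : ∀ {A : Type} (t : Token) (s₁ s₂ : Syn Token Kind Var A),
      ¬ HasConflict env (Syn.disj s₁ s₂) → InFirst env (kd t) (Syn.disj s₁ s₂) →
      ¬ InFirst env (kd t) s₁ → delta t (Syn.disj s₁ s₂) = delta t s₂)
    (hdelta_seqn₁ : ∀ {A B : Type} (t : Token) (s₁ : Syn Token Kind Var A)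
      (s₂ : Syn Token Kind Var B) (v : A),
      ¬ HasConflict env (Syn.seqn s₁ s₂) → InFirst env (kd t) (Syn.seqn s₁ s₂) →
      nullOpt s₁ = some v → InFirst env (kd t) s₂ →
      delta t (Syn.seqn s₁ s₂) = Syn.seqn (Syn.eps v) (delta t s₂))
    (hdelta_seqn₂ : ∀ {A B : Type} (t : Token) (s₁ : Syn Token Kind Var A)
      (s₂ : Syn Token Kind Var B),
      ¬ HasConflict env (Syn.seqn s₁ s₂) → InFirst env (kd t) (Syn.seqn s₁ s₂) →
      (∀ v : A, nullOpt s₁ = some v → ¬ InFirst env (kd t) s₂) →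
      delta t (Syn.seqn s₁ s₂) = Syn.seqn (delta t s₁) s₂)
    (hdelta_map : ∀ {A B : Type} (t : Token) (f : A → B) (s : Syn Token Kind Var A),
      ¬ HasConflict env (Syn.map f s) → InFirst env (kd t) (Syn.map f s) →
      delta t (Syn.map f s) = Syn.map f (delta t s))
    (hdelta_var : ∀ {A : Type} (t : Token) (x : Var A),
      ¬ HasConflict env (Syn.var x : Syn Token Kind Var A) →
      InFirst env (kd t) (Syn.var x : Syn Token Kind Var A) →
      delta t (Syn.var x) = delta t (env A x))
    {A : Type} (s : Syn Token Kind Var A) (t : Token)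
    (hs : ¬ HasConflict env s) (hf : InFirst env (kd t) s)
    (ts : List Token) (v : A) :
    Matches kd env s (t :: ts) v ↔ Matches kd env (delta t s) ts v := by

  generalize hk : kd t = k at hf
  induction hf generalizing ts with subst hk
  | elem =>
    rw [hdelta_elem t _ hs (.elem _), matches_elem_iff, matches_eps_iff]
    grind
  | disjL h₁ ih =>
    rw [hdelta_disj₁ t _ _ hs (.disjL h₁) h₁, matches_disj_cons_iff_left hs h₁]
    exact ih (hs ∘ .disjL) ts v rfl
  | disjR h₂ ih =>
    have h₁ : ¬ InFirst env (kd t) _ := fun h₁ => hs (.disjFF h₁ h₂)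
    rw [hdelta_disj₂ t _ _ hs (.disjR h₂) h₁, matches_disj_cons_iff_right h₁]
    exact ih (hs ∘ .disjR) ts v rfl
  | seqnL h₁ hp ih =>
    have h₂ : ∀ w, Nullable env _ w → ¬ InFirst env (kd t) _ := fun _ hw h₂ =>
      hs (.seqnSF (h₁.inSNF hw) h₂)
    rw [hdelta_seqn₂ t _ _ hs (.seqnL h₁ hp) fun w hw => h₂ w ((hnull _ (hs ∘ .seqnL) w).mp hw),
      matches_seqn_cons_iff_left h₂, matches_seqn_iff]
    simp only [ih (hs ∘ .seqnL) _ _ rfl]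
  | seqnR hn h₂ ih =>
    have hw := (hnull _ (hs ∘ .seqnL) _).mpr hn
    rw [hdelta_seqn₁ t _ _ _ hs (.seqnR hn h₂) hw h₂, matches_seqn_cons_iff_right hs hn h₂,
      matches_seqn_eps_iff, ← hnull _ (hs ∘ .seqnL), hw, Option.some_inj, eq_comm,
      ih (hs ∘ .seqnR) ts _ rfl]
  | map f h ih =>
    rw [hdelta_map t f _ hs (.map f h), matches_map_iff, matches_map_iff]
    simp only [ih (hs ∘ .map f) ts _ rfl]
  | var x h ih =>
    rw [hdelta_var t x hs (.var x h), matches_var_iff]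
    exact ih (hs ∘ .var x) ts v rfl

end
end

section
/- If locate returns none then the focused syntax cannot start with the given kind: for every LL(1) focused syntax (s, c) and kind k, if locate k (s, c) = none then k ∉ First (unfocus (s, c)). -/
set_option autoImplicit false

/-!
Induction on the context. If `k ∉ First s` and `s` is not nullable, no layer around `s` can
contribute `k` to the first set. Otherwise `locate` steps past the nullable focus `s` into the
innermost layer `l`, and one checks that it then also fails on the focus `(l.wrap s, c)`, in which
`l` has been absorbed into the syntax; since this focus unfocuses to the same syntax, the
induction hypothesis applies. For `l = followBy s'`, `locate` has moved on to `s'`, so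
`k ∉ First s'`; either `s'` is nullable and `locate` steps past it as well, or `seqn s s'` is not
nullable and the first case applies.
-/

section

variable {Token Kind : Type} {Var : Type → Type}
variable (env : ∀ A : Type, Var A → Syn Token Kind Var A)

theorem inFirst_seqn_iff {A B : Type} {k : Kind} {s₁ : Syn Token Kind Var A}
    {s₂ : Syn Token Kind Var B} :
    InFirst env k (Syn.seqn s₁ s₂) ↔
      InFirst env k s₁ ∧ Productive env s₂ ∨ (∃ v, Nullable env s₁ v) ∧ InFirst env k s₂ := by
  refine ⟨fun h => ?_, ?_⟩
  -- `cases h` fails here: it cannot solve `A × B = A' × B'`, as `Prod` is not injective.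
  · have inv : ∀ {C : Type} (t : Syn Token Kind Var C), InFirst env k t →
        match t with
        | Syn.seqn t₁ t₂ =>
          InFirst env k t₁ ∧ Productive env t₂ ∨ (∃ v, Nullable env t₁ v) ∧ InFirst env k t₂
        | _ => True := by
      intro C t ht
      cases ht with
      | seqnL h₁ h₂ => exact .inl ⟨h₁, h₂⟩
      | seqnR h₁ h₂ => exact .inr ⟨⟨_, h₁⟩, h₂⟩
      | _ => trivial
    exact inv _ h
  · rintro (⟨h₁, h₂⟩ | ⟨⟨v, h₁⟩, h₂⟩)
    exacts [.seqnL h₁ h₂, .seqnR h₁ h₂]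

theorem nullable_seqn_iff {A B : Type} {s₁ : Syn Token Kind Var A}
    {s₂ : Syn Token Kind Var B} {v : A × B} :
    Nullable env (Syn.seqn s₁ s₂) v ↔ Nullable env s₁ v.1 ∧ Nullable env s₂ v.2 := by
  refine ⟨fun h => ?_, fun ⟨h₁, h₂⟩ => .seqn h₁ h₂⟩
  have inv : ∀ {C : Type} (t : Syn Token Kind Var C) (w : C), Nullable env t w →
      match t, w with
      | Syn.seqn t₁ t₂, w => Nullable env t₁ w.1 ∧ Nullable env t₂ w.2
      | _, _ => True := by
    intro C t w hw
    cases hw with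
    | seqn h₁ h₂ => exact ⟨h₁, h₂⟩
    | _ => trivial
  exact inv _ _ h

theorem inFirst_map_iff {A B : Type} {k : Kind} {f : A → B} {s : Syn Token Kind Var A} :
    InFirst env k (Syn.map f s) ↔ InFirst env k s :=
  ⟨fun h => by cases h with | map _ h => exact h, .map f⟩

theorem exists_nullable_map_iff {A B : Type} {f : A → B} {s : Syn Token Kind Var A} :
    (∃ w, Nullable env (Syn.map f s) w) ↔ ∃ v, Nullable env s v :=
  ⟨fun ⟨_, h⟩ => by cases h with | map _ h => exact ⟨_, h⟩, fun ⟨v, h⟩ => ⟨_, .map f h⟩⟩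

theorem not_inFirst_eps {A : Type} {k : Kind} (v : A) :
    ¬ InFirst env k (Syn.eps v : Syn Token Kind Var A) := nofun

theorem not_inFirst_seqn {A B : Type} {k : Kind} {s₁ : Syn Token Kind Var A}
    {s₂ : Syn Token Kind Var B} (h₁ : ¬ InFirst env k s₁) (h₂ : ¬ InFirst env k s₂) :
    ¬ InFirst env k (Syn.seqn s₁ s₂) := by
  simp [inFirst_seqn_iff, h₁, h₂]

end

namespace Layer

variable {Token Kind : Type} {Var : Type → Type}
variable (env : ∀ A : Type, Var A → Syn Token Kind Var A)

def wrap {A B : Type} : Layer Token Kind Var A B → Syn Token Kind Var A → Syn Token Kind Var B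
  | apply f, s => Syn.map f s
  | prepend v, s => Syn.seqn (Syn.eps v) s
  | followBy s', s => Syn.seqn s s'

theorem hasConflict_wrap {A B : Type} (l : Layer Token Kind Var A B)
    {s : Syn Token Kind Var A} (h : HasConflict env s) : HasConflict env (l.wrap s) := by
  cases l
  exacts [.map _ h, .seqnR h, .seqnL h]

theorem not_nullable_wrap {A B : Type} (l : Layer Token Kind Var A B)
    {s : Syn Token Kind Var A} (hs : ∀ v, ¬ Nullable env s v) (v : B) :
    ¬ Nullable env (l.wrap s) v := by
  cases l with
  | apply f => exact fun h => not_exists.mpr hs ((exists_nullable_map_iff env).mp ⟨v, h⟩)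
  | prepend => exact fun h => hs _ ((nullable_seqn_iff env).mp h).2
  | followBy => exact fun h => hs _ ((nullable_seqn_iff env).mp h).1

theorem not_inFirst_wrap {A B : Type} {k : Kind} (l : Layer Token Kind Var A B)
    {s : Syn Token Kind Var A} (hk : ¬ InFirst env k s) (hs : ∀ v, ¬ Nullable env s v) :
    ¬ InFirst env k (l.wrap s) := by
  cases l with
  | apply f => exact (inFirst_map_iff env).not.mpr hk
  | prepend v => exact not_inFirst_seqn env (not_inFirst_eps env v) hk
  | followBy s' => simp [wrap, inFirst_seqn_iff, hk, hs]

end Layer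

section

variable {Token Kind : Type} {Var : Type → Type}
variable (env : ∀ A : Type, Var A → Syn Token Kind Var A)

theorem unfocus_cons {A B C : Type} (s : Syn Token Kind Var A) (l : Layer Token Kind Var A B)
    (c : Ctx Token Kind Var B C) : unfocus s (Ctx.cons l c) = unfocus (l.wrap s) c := by
  cases l <;> rfl

theorem hasConflict_unfocus {A B : Type} {s : Syn Token Kind Var A} (c : Ctx Token Kind Var A B)
    (h : HasConflict env s) : HasConflict env (unfocus s c) := by
  induction c with
  | nil => exact h
  | cons l c ih => rw [unfocus_cons]; exact ih (l.hasConflict_wrap env h)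

theorem not_inFirst_unfocus {A B : Type} {k : Kind} {s : Syn Token Kind Var A}
    (c : Ctx Token Kind Var A B) (hk : ¬ InFirst env k s) (hs : ∀ v, ¬ Nullable env s v) :
    ¬ InFirst env k (unfocus s c) := by
  induction c with
  | nil => exact hk
  | cons l c ih =>
    rw [unfocus_cons]; exact ih (l.not_inFirst_wrap env hk hs) (l.not_nullable_wrap env hs)

/-- `nullOpt` plays `nullable?` and `locate` plays `locate`: the fields are their defining
equations. -/
structure LocateSpec (nullOpt : ∀ {A : Type}, Syn Token Kind Var A → Option A)
    (locate : ∀ {B : Type}, Kind → Focused Token Kind Var B → Option (Focused Token Kind Var B)) :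
    Prop where
  nullOpt_eq_some_iff : ∀ {A : Type} (s : Syn Token Kind Var A), ¬ HasConflict env s →
    ∀ v : A, nullOpt s = some v ↔ Nullable env s v
  locate_of_inFirst : ∀ {A B : Type} (k : Kind) (s : Syn Token Kind Var A)
    (c : Ctx Token Kind Var A B), InFirst env k s →
    locate k (⟨A, s, c⟩ : Focused Token Kind Var B) = some (⟨A, s, c⟩ : Focused Token Kind Var B)
  locate_of_nullOpt : ∀ {A B : Type} (k : Kind) (s : Syn Token Kind Var A)
    (c : Ctx Token Kind Var A B) (v : A),
    ¬ InFirst env k s → nullOpt s = some v → c.isNil = false →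
    locate k (⟨A, s, c⟩ : Focused Token Kind Var B) = locate k (plug v c)
  locate_nil : ∀ {A : Type} (k : Kind) (s : Syn Token Kind Var A),
    ¬ InFirst env k s → locate k (⟨A, s, Ctx.nil⟩ : Focused Token Kind Var A) = none

end

namespace LocateSpec

variable {Token Kind : Type} {Var : Type → Type}
variable {env : ∀ A : Type, Var A → Syn Token Kind Var A}
variable {nullOpt : ∀ {A : Type}, Syn Token Kind Var A → Option A}
variable
  {locate : ∀ {B : Type}, Kind → Focused Token Kind Var B → Option (Focused Token Kind Var B)}

theorem not_inFirst_of_locate_eq_none (hL : LocateSpec env nullOpt locate) {A B : Type} {k : Kind}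
    {s : Syn Token Kind Var A} {c : Ctx Token Kind Var A B}
    (h : locate k (⟨A, s, c⟩ : Focused Token Kind Var B) = none) : ¬ InFirst env k s :=
  fun hk => Option.some_ne_none _ ((hL.locate_of_inFirst k s c hk).symm.trans h)

theorem locate_plug_eq_none (hL : LocateSpec env nullOpt locate) {A B C : Type} {k : Kind}
    {s : Syn Token Kind Var A} {l : Layer Token Kind Var A B} {c : Ctx Token Kind Var B C} {v : A}
    (hv : Nullable env s v) (hs : ¬ HasConflict env s)
    (h : locate k (⟨A, s, Ctx.cons l c⟩ : Focused Token Kind Var C) = none) :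
    locate k (plug v (Ctx.cons l c)) = none :=
  (hL.locate_of_nullOpt k s _ v (hL.not_inFirst_of_locate_eq_none h)
    ((hL.nullOpt_eq_some_iff s hs v).mpr hv) rfl).symm.trans h

theorem locate_eq_none_of_plug (hL : LocateSpec env nullOpt locate) {A B : Type} {k : Kind}
    {s : Syn Token Kind Var A} {c : Ctx Token Kind Var A B} {v : A}
    (hk : ¬ InFirst env k s) (hv : Nullable env s v) (hs : ¬ HasConflict env s)
    (h : locate k (plug v c) = none) : locate k (⟨A, s, c⟩ : Focused Token Kind Var B) = none := by
  cases c with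
  | nil => exact hL.locate_nil k s hk
  | cons l c => rw [hL.locate_of_nullOpt k s _ v hk ((hL.nullOpt_eq_some_iff s hs v).mpr hv) rfl, h]

theorem locate_wrap_eq_none (hL : LocateSpec env nullOpt locate) {A B C : Type} {k : Kind}
    {s : Syn Token Kind Var A} {l : Layer Token Kind Var A B} {c : Ctx Token Kind Var B C} {v : A}
    (hk : ¬ InFirst env k s) (hv : Nullable env s v) (hl : ¬ HasConflict env (l.wrap s))
    (h : locate k (plug v (Ctx.cons l c)) = none) :
    ¬ InFirst env k (l.wrap s) ∧
      (locate k (⟨B, l.wrap s, c⟩ : Focused Token Kind Var C) = none ∨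
        ∀ u, ¬ Nullable env (l.wrap s) u) := by
  cases l with
  | apply f =>
    have hk' : ¬ InFirst env k (Syn.map f s) := (inFirst_map_iff env).not.mpr hk
    exact ⟨hk', .inl (hL.locate_eq_none_of_plug hk' (.map f hv) hl h)⟩
  | prepend v' =>
    have hk' := not_inFirst_seqn env (not_inFirst_eps env v') hk
    exact ⟨hk', .inl (hL.locate_eq_none_of_plug hk' (.seqn (.eps v') hv) hl h)⟩
  | followBy s' =>
    have hk' := not_inFirst_seqn env hk (hL.not_inFirst_of_locate_eq_none h)
    refine ⟨hk', ?_⟩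
    by_cases hs' : ∃ w, Nullable env s' w
    · obtain ⟨w, hw⟩ := hs'
      exact .inl (hL.locate_eq_none_of_plug hk' (.seqn hv hw) hl
        (hL.locate_plug_eq_none hw (hl ∘ .seqnR) h))
    · exact .inr fun u hu => hs' ⟨_, ((nullable_seqn_iff env).mp hu).2⟩

theorem not_inFirst_unfocus_of_locate_eq_none (hL : LocateSpec env nullOpt locate)
    {A B : Type} {k : Kind} (s : Syn Token Kind Var A) (c : Ctx Token Kind Var A B)
    (hll1 : ¬ HasConflict env (unfocus s c))
    (h : locate k (⟨A, s, c⟩ : Focused Token Kind Var B) = none) :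
    ¬ InFirst env k (unfocus s c) := by
  induction c with
  | nil => exact hL.not_inFirst_of_locate_eq_none h
  | cons l c ih =>
    have hk := hL.not_inFirst_of_locate_eq_none h
    by_cases hs : ∃ v, Nullable env s v
    · obtain ⟨v, hv⟩ := hs
      have hplug := hL.locate_plug_eq_none hv (hll1 ∘ hasConflict_unfocus env _) h
      rw [unfocus_cons] at hll1 ⊢
      obtain ⟨hk', hwrap | hwrap⟩ :=
        hL.locate_wrap_eq_none hk hv (hll1 ∘ hasConflict_unfocus env _) hplug
      · exact ih _ hll1 hwrap
      · exact not_inFirst_unfocus env c hk' hwrap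
    · exact not_inFirst_unfocus env _ hk (not_exists.mp hs)

end LocateSpec

section

variable {Token Kind : Type} {Var : Type → Type}
variable (kd : Token → Kind) (env : ∀ A : Type, Var A → Syn Token Kind Var A)

theorem locate_none_not_first
    (nullOpt : ∀ {A : Type}, Syn Token Kind Var A → Option A)
    (hnull : ∀ {A : Type} (s : Syn Token Kind Var A), ¬ HasConflict env s →
      ∀ v : A, nullOpt s = some v ↔ Nullable env s v)
    (locate : ∀ {B : Type}, Kind → Focused Token Kind Var B →
      Option (Focused Token Kind Var B))
    (hlocate_first : ∀ {A B : Type} (k : Kind) (s : Syn Token Kind Var A)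
      (c : Ctx Token Kind Var A B), InFirst env k s →
      locate k (⟨A, s, c⟩ : Focused Token Kind Var B) =
        some (⟨A, s, c⟩ : Focused Token Kind Var B))
    (hlocate_plug : ∀ {A B : Type} (k : Kind) (s : Syn Token Kind Var A)
      (c : Ctx Token Kind Var A B) (v : A),
      ¬ InFirst env k s → nullOpt s = some v → c.isNil = false →
      locate k (⟨A, s, c⟩ : Focused Token Kind Var B) = locate k (plug v c))
    (hlocate_none₂ : ∀ {A : Type} (k : Kind) (s : Syn Token Kind Var A),
      ¬ InFirst env k s →
      locate k (⟨A, s, Ctx.nil⟩ : Focused Token Kind Var A) = none)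
    {A B : Type} (s : Syn Token Kind Var A) (c : Ctx Token Kind Var A B) (k : Kind)
    (hll1 : ¬ HasConflict env (unfocus s c))
    (h : locate k (⟨A, s, c⟩ : Focused Token Kind Var B) = none) :
    ¬ InFirst env k (unfocus s c) :=
  LocateSpec.not_inFirst_unfocus_of_locate_eq_none
    ⟨hnull, hlocate_first, hlocate_plug, hlocate_none₂⟩ s c hll1 h

end
end
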